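/- arXiv:1212.3878 — 4 statements merged into one kernel-verified Lean document; each statement's English description precedes it below -/
import Mathlib

section
/- Soundness of coherent quotienting: if states s' and s'' of a transducer T are coherently equivalent under protocol P (i.e., s' coherently simulates s'' and vice versa), then T and the quotient T/(s',s'') are coherently equivalent under P, i.e., ⟦T ∩ P⟧ = ⟦T/(s',s'') ∩ P⟧. -/
/-- A transducer over label alphabet `A`: rounds are subsets of `A`. -/
structure Transducer (A : Type) where
  S : Type
  init : S
  delta : S → Set A → S → Prop

/-- Extension of the transition relation to traces (sequences of rounds). -/
inductive ExtDelta {A : Type} (T : Transducer A) : T.S → List (Set A) → T.S → Prop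
  | nil (q : T.S) : ExtDelta T q [] q
  | snoc {s s'' s' : T.S} {t : List (Set A)} {V : Set A} :
      ExtDelta T s t s'' → T.delta s'' V s' → ExtDelta T s (t ++ [V]) s'

/-- The trace set of a transducer. -/
def traces {A : Type} (T : Transducer A) : Set (List (Set A)) :=
  {t | ∃ s, ExtDelta T T.init t s}

/-- Intersection (synchronized product) of transducers. -/
def inter {A : Type} (T T' : Transducer A) : Transducer A where
  S := T.S × T'.S
  init := (T.init, T'.init)
  delta := fun p V q => T.delta p.1 V q.1 ∧ T'.delta p.2 V q.2

/-- Witness traces reaching a state. -/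
def witnessSet {A : Type} (T : Transducer A) (s : T.S) : Set (List (Set A)) :=
  {t | t ∈ traces T ∧ ExtDelta T T.init t s}

open Classical in
/-- Quotient map identifying `s₂` with `s₁`. -/
noncomputable def qmap {A : Type} (T : Transducer A) (s₁ s₂ : T.S) (x : T.S) : T.S :=
  if x = s₂ then s₁ else x

/-- The quotient transducer identifying states `s₁` and `s₂`. -/
noncomputable def quotT {A : Type} (T : Transducer A) (s₁ s₂ : T.S) : Transducer A where
  S := T.S
  init := qmap T s₁ s₂ T.init
  delta := fun r₁ V r₂ =>
    ∃ r₁' r₂', qmap T s₁ s₂ r₁' = r₁ ∧ qmap T s₁ s₂ r₂' = r₂ ∧ T.delta r₁' V r₂'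

/-- Coherent simulation with respect to protocol `P`. -/
def CoherentSim {A : Type} (T P : Transducer A) (R : Set (T.S × T.S)) : Prop :=
  ∀ s' s'', (s', s'') ∈ R →
    (∀ (V : Set A) (r'' : T.S), T.delta s'' V r'' →
        ∃ r', T.delta s' V r' ∧ (r', r'') ∈ R) ∧
    (∀ V : Set A, (¬ ∃ r'', T.delta s'' V r'') →
        ((¬ ∃ r', T.delta s' V r') ∨ ∀ t ∈ witnessSet T s'', t ++ [V] ∉ traces P))

/-- Plain simulation (clause 1 of coherent simulation only). -/
def SimOnly {A : Type} (T : Transducer A) (R : Set (T.S × T.S)) : Prop :=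
  ∀ a b, (a, b) ∈ R → ∀ (V : Set A) (r : T.S), T.delta b V r →
    ∃ a₂, T.delta a V a₂ ∧ (a₂, r) ∈ R

def Sim {A : Type} (T : Transducer A) (a b : T.S) : Prop :=
  ∃ R, SimOnly T R ∧ (a, b) ∈ R

lemma sim_refl {A : Type} (T : Transducer A) (a : T.S) : Sim T a a :=
  ⟨{p | p.1 = p.2}, fun x y hxy V r hr => by
    simp only [Set.mem_setOf_eq] at hxy
    subst hxy; exact ⟨r, hr, rfl⟩, rfl⟩

lemma sim_step {A : Type} (T : Transducer A) {a b : T.S} (h : Sim T a b)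
    {V : Set A} {r : T.S} (hd : T.delta b V r) :
    ∃ a₂, T.delta a V a₂ ∧ Sim T a₂ r := by
  obtain ⟨R, hR, hab⟩ := h
  obtain ⟨a₂, hda, hmem⟩ := hR a b hab V r hd
  exact ⟨a₂, hda, R, hR, hmem⟩

lemma sim_trans {A : Type} (T : Transducer A) {a b c : T.S}
    (h₁ : Sim T a b) (h₂ : Sim T b c) : Sim T a c := by
  obtain ⟨R, hR, hab⟩ := h₁
  obtain ⟨R', hR', hbc⟩ := h₂
  refine ⟨{p | ∃ m, (p.1, m) ∈ R ∧ (m, p.2) ∈ R'}, ?_, ⟨b, hab, hbc⟩⟩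
  rintro x z ⟨m, hxm, hmz⟩ V r hr
  obtain ⟨m₂, hdm, hm₂⟩ := hR' m z hmz V r hr
  obtain ⟨x₂, hdx, hx₂⟩ := hR x m hxm V m₂ hdm
  exact ⟨x₂, hdx, m₂, hx₂, hm₂⟩

lemma coherent_to_sim {A : Type} {T P : Transducer A} {a b : T.S}
    (h : ∃ R, CoherentSim T P R ∧ (a, b) ∈ R) : Sim T a b := by
  obtain ⟨R, hR, hab⟩ := h
  exact ⟨R, fun x y hxy => (hR x y hxy).1, hab⟩

lemma qmap_eq_cases {A : Type} (T : Transducer A) (s₁ s₂ x y : T.S)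
    (h : qmap T s₁ s₂ x = qmap T s₁ s₂ y) :
    x = y ∨ (x = s₁ ∧ y = s₂) ∨ (x = s₂ ∧ y = s₁) := by
  unfold qmap at h
  split_ifs at h with h1 h2 h2
  · left; rw [h1, h2]
  · right; right; exact ⟨h1, h.symm⟩
  · right; left; exact ⟨h, h2⟩
  · left; exact h

theorem coherent_quotient_sound {A : Type} (T P : Transducer A) (s' s'' : T.S)
    (h₁ : ∃ R, CoherentSim T P R ∧ (s', s'') ∈ R)
    (h₂ : ∃ R, CoherentSim T P R ∧ (s'', s') ∈ R) :
    traces (inter T P) = traces (inter (quotT T s' s'') P) := by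
  have hS1 : Sim T s' s'' := coherent_to_sim h₁
  have hS2 : Sim T s'' s' := coherent_to_sim h₂
  have key : ∀ x y : T.S, qmap T s' s'' x = qmap T s' s'' y → Sim T x y := by
    intro x y h
    rcases qmap_eq_cases T s' s'' x y h with h | ⟨hx, hy⟩ | ⟨hx, hy⟩
    · subst h; exact sim_refl T x
    · subst hx; subst hy; exact hS1
    · subst hx; subst hy; exact hS2
  apply Set.eq_of_subset_of_subset
  · rintro t ⟨sp, h⟩
    refine ⟨(qmap T s' s'' sp.1, sp.2), ?_⟩
    induction h with
    | nil => exact ExtDelta.nil _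
    | snoc hprev d ih =>
      exact ExtDelta.snoc ih ⟨⟨_, _, rfl, rfl, d.1⟩, d.2⟩
  · rintro t ⟨qp, h⟩
    suffices hsuff : ∃ x y, ExtDelta (inter T P) (inter T P).init t (x, qp.2) ∧
        qmap T s' s'' y = qp.1 ∧ Sim T x y by
      obtain ⟨x, y, hx, -, -⟩ := hsuff
      exact ⟨(x, qp.2), hx⟩
    induction h with
    | nil => exact ⟨T.init, T.init, ExtDelta.nil _, rfl, sim_refl T T.init⟩
    | snoc hprev d ih =>
      obtain ⟨x, y, hx, hy, hsim⟩ := ih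
      obtain ⟨⟨r₁', r₂', hq1, hq2, hd⟩, hp⟩ := d
      have hsim2 : Sim T x r₁' := sim_trans T hsim (key y r₁' (hy.trans hq1.symm))
      obtain ⟨x₂, hdx, hsimx⟩ := sim_step T hsim2 hd
      exact ⟨x₂, r₂', ExtDelta.snoc hx ⟨hdx, hp⟩, hq2, hsimx⟩
end

section
/- Soundness of transducer interaction: for transducers T : A+B and T' : B+C, the trace set of T ∥ T' equals the interaction of the trace sets: ⟦T ∥ T'⟧ = ⟦T⟧ ∥ ⟦T'⟧, where the right-hand side is { t ∈ 𝒫(A+B+C)* | t↾(A+B) ∈ ⟦T⟧ ∧ t↾(B+C) ∈ ⟦T'⟧ }. -/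
/-- Projection of a trace onto a sub-signature `X`. -/
def projTrace {L : Type} (X : Set L) (t : List (Set L)) : List (Set L) :=
  t.map (fun V => V ∩ X)

/-- Interaction (synchronization on projected rounds) of transducers with
signatures `X` and `Y`. -/
def interactT {L : Type} (X Y : Set L) (T T' : Transducer L) : Transducer L where
  S := T.S × T'.S
  init := (T.init, T'.init)
  delta := fun p V q => V ⊆ X ∪ Y ∧ T.delta p.1 (V ∩ X) q.1 ∧ T'.delta p.2 (V ∩ Y) q.2

/-- Projection of a transducer onto sub-signature `X`. -/
def projT {L : Type} (X : Set L) (T : Transducer L) : Transducer L where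
  S := T.S
  init := T.init
  delta := fun s V s' => ∃ W, V = W ∩ X ∧ T.delta s W s'

/-- Interaction of trace sets over signatures `X` and `Y`. -/
def interactSet {L : Type} (X Y : Set L) (θ θ' : Set (List (Set L))) :
    Set (List (Set L)) :=
  {t | (∀ V ∈ t, V ⊆ X ∪ Y) ∧ projTrace X t ∈ θ ∧ projTrace Y t ∈ θ'}

/-- Composition of a transducer over `A+B` with one over `B+C`. -/
def composeT {L : Type} (A B C : Set L) (T T' : Transducer L) : Transducer L :=
  projT (A ∪ C) (interactT (A ∪ B) (B ∪ C) T T')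

namespace ExtDelta

variable {A : Type} {T : Transducer A}

theorem nil_iff {s s' : T.S} : ExtDelta T s [] s' ↔ s = s' := by
  refine ⟨fun h => ?_, fun h => h ▸ nil s⟩
  generalize ht : ([] : List (Set A)) = t at h
  cases h with
  | nil => rfl
  | snoc => simp at ht

theorem append_singleton_iff {s s' : T.S} {t : List (Set A)} {V : Set A} :
    ExtDelta T s (t ++ [V]) s' ↔ ∃ s'', ExtDelta T s t s'' ∧ T.delta s'' V s' := by
  refine ⟨fun h => ?_, fun ⟨_, h, hV⟩ => snoc h hV⟩
  generalize ht : t ++ [V] = u at h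
  cases h with
  | nil => simp at ht
  | snoc h hV =>
    obtain ⟨rfl, rfl⟩ := List.append_inj' ht rfl |>.imp_right List.singleton_inj.mp
    exact ⟨_, h, hV⟩

end ExtDelta

section projTrace

variable {L : Type} (X : Set L)

@[simp]
theorem projTrace_nil : projTrace X [] = [] := rfl

@[simp]
theorem projTrace_singleton (V : Set L) : projTrace X [V] = [V ∩ X] := rfl

@[simp]
theorem projTrace_append (t u : List (Set L)) :
    projTrace X (t ++ u) = projTrace X t ++ projTrace X u :=
  List.map_append

end projTrace

theorem extDelta_interactT_iff {L : Type} (X Y : Set L) (T T' : Transducer L)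
    {p q : T.S × T'.S} {t : List (Set L)} :
    ExtDelta (interactT X Y T T') p t q ↔
      (∀ V ∈ t, V ⊆ X ∪ Y) ∧ ExtDelta T p.1 (projTrace X t) q.1 ∧
        ExtDelta T' p.2 (projTrace Y t) q.2 := by
  induction t using List.reverseRecOn generalizing q with
  | nil =>
    refine ExtDelta.nil_iff.trans ?_
    simp only [projTrace_nil, ExtDelta.nil_iff, and_iff_right (List.forall_mem_nil _)]
    exact Prod.ext_iff
  | append_singleton t V ih =>
    refine ExtDelta.append_singleton_iff.trans ?_
    simp only [projTrace_append, projTrace_singleton, ExtDelta.append_singleton_iff,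
      List.forall_mem_append, List.forall_mem_singleton]
    constructor
    · rintro ⟨r, hr, hV, hX, hY⟩
      obtain ⟨ht, hrX, hrY⟩ := ih.mp hr
      exact ⟨⟨ht, hV⟩, ⟨r.1, hrX, hX⟩, ⟨r.2, hrY, hY⟩⟩
    · rintro ⟨⟨ht, hV⟩, ⟨r, hrX, hX⟩, ⟨r', hrY, hY⟩⟩
      exact ⟨(r, r'), ih.mpr ⟨ht, hrX, hrY⟩, hV, hX, hY⟩

theorem interact_traces {L : Type} (A B C : Set L)
    (T T' : Transducer L) :
    traces (interactT (A ∪ B) (B ∪ C) T T')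
      = interactSet (A ∪ B) (B ∪ C) (traces T) (traces T') := by
  ext t
  constructor
  · rintro ⟨q, hq⟩
    obtain ⟨hsub, hT, hT'⟩ := (extDelta_interactT_iff _ _ _ _).mp hq
    exact ⟨hsub, ⟨_, hT⟩, ⟨_, hT'⟩⟩
  · rintro ⟨hsub, ⟨s, hT⟩, ⟨s', hT'⟩⟩
    exact ⟨(s, s'), (extDelta_interactT_iff _ _ _ _).mpr ⟨hsub, hT, hT'⟩⟩
end

section
/- Coherent state simulation is in general not transitive: there exists a transducer T and protocol P with states s₁, s₂, s₃ such that s₁ is coherently similar to s₂ and s₂ is coherently similar to s₃ (each pair contained in some coherent simulation), but no coherent simulation contains (s₁, s₃). -/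
/-!
A stuck state may be coherently simulated by a state that can move only if none of its witness
traces extends to a trace of the protocol. An unreachable stuck state `dead` has no witness traces,
so a state `loop` that can always move simulates it; being stuck, it simulates the stuck state
`sink`. But `sink` is reachable, so under the protocol allowing every trace `loop` cannot simulate
`sink`.
-/

def Transducer.Stuck {A : Type} (T : Transducer A) (s : T.S) : Prop :=
  ∀ V r, ¬ T.delta s V r

open Transducer

section

variable {A : Type} {T : Transducer A}

theorem ExtDelta.eq_nil_of_forall_not_delta {s r : T.S} {t : List (Set A)}
    (hr : ∀ q V, ¬ T.delta q V r) (h : ExtDelta T s t r) : t = [] ∧ s = r := by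
  cases h with
  | nil => exact ⟨rfl, rfl⟩
  | snoc _ hstep => exact (hr _ _ hstep).elim

theorem witnessSet_eq_empty_of_forall_not_delta {r : T.S} (hr : ∀ q V, ¬ T.delta q V r)
    (hinit : T.init ≠ r) : witnessSet T r = ∅ :=
  Set.eq_empty_of_forall_notMem fun _ ⟨_, h⟩ => hinit (ExtDelta.eq_nil_of_forall_not_delta hr h).2

variable {P : Transducer A} {R : Set (T.S × T.S)} {s' s'' : T.S}

theorem CoherentSim.not_mem_traces_of_stuck (hR : CoherentSim T P R) (hmem : (s', s'') ∈ R)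
    (hs'' : Stuck T s'') {V : Set A} (hV : ∃ r', T.delta s' V r') :
    ∀ t ∈ witnessSet T s'', t ++ [V] ∉ traces P :=
  ((hR s' s'' hmem).2 V fun ⟨r'', h⟩ => hs'' V r'' h).resolve_left (not_not.2 hV)

theorem coherentSim_singleton_iff_of_stuck (hs'' : Stuck T s'') :
    CoherentSim T P {(s', s'')} ↔
      ∀ V, (∃ r', T.delta s' V r') → ∀ t ∈ witnessSet T s'', t ++ [V] ∉ traces P := by
  refine ⟨fun hR _ => hR.not_mem_traces_of_stuck rfl hs'', fun h => ?_⟩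
  rintro _ _ ⟨⟩
  refine ⟨fun V r'' hstep => (hs'' V r'' hstep).elim, fun V _ => ?_⟩
  by_cases hV : ∃ r', T.delta s' V r'
  · exact Or.inr (h V hV)
  · exact Or.inl hV

end

def Transducer.chaos (A : Type) : Transducer A where
  S := Unit
  init := ()
  delta _ _ _ := True

theorem extDelta_chaos {A : Type} (t : List (Set A)) : ExtDelta (chaos A) () t () := by
  induction t using List.reverseRecOn with
  | nil => exact ExtDelta.nil (T := chaos A) ()
  | append_singleton t V ih => exact ExtDelta.snoc ih trivial

theorem traces_chaos {A : Type} : traces (chaos A) = Set.univ :=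
  Set.eq_univ_of_forall fun t => ⟨(), extDelta_chaos t⟩

inductive ExampleState
  | start
  | loop
  | dead
  | sink

inductive ExampleStep : ExampleState → Set ℕ → ExampleState → Prop
  | start (V : Set ℕ) : ExampleStep .start V .sink
  | loop (V : Set ℕ) : ExampleStep .loop V .loop

def exampleTransducer : Transducer ℕ where
  S := ExampleState
  init := .start
  delta := ExampleStep

theorem exampleTransducer_stuck_dead : Stuck exampleTransducer .dead := by
  rintro _ _ ⟨⟩

theorem exampleTransducer_stuck_sink : Stuck exampleTransducer .sink := by
  rintro _ _ ⟨⟩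

theorem witnessSet_exampleTransducer_dead : witnessSet exampleTransducer .dead = ∅ :=
  witnessSet_eq_empty_of_forall_not_delta (by rintro _ _ ⟨⟩) (by rintro ⟨⟩)

theorem singleton_mem_witnessSet_exampleTransducer_sink (V : Set ℕ) :
    [V] ∈ witnessSet exampleTransducer .sink :=
  have h : ExtDelta exampleTransducer .start ([] ++ [V]) .sink :=
    ExtDelta.snoc (ExtDelta.nil _) (ExampleStep.start V)
  ⟨⟨_, h⟩, h⟩

theorem coherentSim_not_transitive :
    ∃ (T P : Transducer ℕ) (s₁ s₂ s₃ : T.S),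
      (∃ R, CoherentSim T P R ∧ (s₁, s₂) ∈ R) ∧
      (∃ R, CoherentSim T P R ∧ (s₂, s₃) ∈ R) ∧
      ¬ ∃ R, CoherentSim T P R ∧ (s₁, s₃) ∈ R := by
  refine ⟨exampleTransducer, chaos ℕ, .loop, .dead, .sink, ⟨_, ?_, Set.mem_singleton _⟩,
    ⟨_, ?_, Set.mem_singleton _⟩, ?_⟩
  · refine (coherentSim_singleton_iff_of_stuck exampleTransducer_stuck_dead).2 fun _ _ => ?_
    simp [witnessSet_exampleTransducer_dead]
  · exact (coherentSim_singleton_iff_of_stuck exampleTransducer_stuck_sink).2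
      fun V ⟨r, h⟩ => (exampleTransducer_stuck_dead V r h).elim
  · rintro ⟨R, hR, hmem⟩
    exact hR.not_mem_traces_of_stuck hmem exampleTransducer_stuck_sink ⟨.loop, .loop ∅⟩ [∅]
      (singleton_mem_witnessSet_exampleTransducer_sink ∅) (traces_chaos ▸ trivial)
end

section
/- If all states related by a relation R have equal sets of outgoing transition labels and R is a coherent simulation in both directions on each pair, then the quotient by any R-related pair preserves the trace set exactly when restricted to protocol traces: ⟦T/(s',s'') ∩ P⟧ ⊆ ⟦T ∩ P⟧ given s' ≍ᴾ s'' (mutual coherent simulation). -/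
theorem quot_inter_subset {A : Type} (T P : Transducer A) (s' s'' : T.S)
    (R : Set (T.S × T.S))
    (hsim : CoherentSim T P R)
    (hsym : ∀ p ∈ R, (p.2, p.1) ∈ R)
    (hlab : ∀ p ∈ R, ∀ V : Set A,
      (∃ r, T.delta p.1 V r) ↔ (∃ r, T.delta p.2 V r))
    (hmem : (s', s'') ∈ R) :
    traces (inter (quotT T s' s'') P) ⊆ traces (inter T P) := by
  have hstep : ∀ a b, Relation.ReflTransGen (fun x y => (x, y) ∈ R) a b →
      ∀ (V : Set A) (r : T.S), T.delta b V r →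
      ∃ r₀, T.delta a V r₀ ∧ Relation.ReflTransGen (fun x y => (x, y) ∈ R) r₀ r := by
    intro a b h
    induction h using Relation.ReflTransGen.head_induction_on with
    | refl => exact fun V r hd => ⟨r, hd, .refl⟩
    | head hab _ ih =>
      intro V r hd
      obtain ⟨r₁, hd₁, hs₁⟩ := ih V r hd
      obtain ⟨r₀, hd₀, hr₀⟩ := (hsim _ _ hab).1 V r₁ hd₁
      exact ⟨r₀, hd₀, .head hr₀ hs₁⟩
  have hfix : ∀ (q₁ r₂' r : T.S),
      Relation.ReflTransGen (fun x y => (x, y) ∈ R) q₁ r₂' →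
      qmap T s' s'' r = qmap T s' s'' r₂' →
      Relation.ReflTransGen (fun x y => (x, y) ∈ R) q₁ r := by
    intro q₁ r₂' r hsq hq
    unfold qmap at hq
    by_cases h1 : r = s'' <;> by_cases h2 : r₂' = s'' <;> simp [h1, h2] at hq
    · exact h1 ▸ h2 ▸ hsq
    · subst h1; subst hq
      exact hsq.tail hmem
    · subst h2; subst hq
      exact hsq.tail (hsym _ hmem)
    · exact hq ▸ hsq
  have main : ∀ (t : List (Set A)) (z : (inter (quotT T s' s'') P).S),
      ExtDelta (inter (quotT T s' s'') P) (inter (quotT T s' s'') P).init t z →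
      ∃ q₀, ExtDelta (inter T P) (inter T P).init t (q₀, z.2) ∧
        ∀ r, qmap T s' s'' r = z.1 →
          Relation.ReflTransGen (fun x y => (x, y) ∈ R) q₀ r := by
    intro t z h
    induction h with
    | nil =>
      exact ⟨T.init, .nil _, fun r hr => hfix T.init T.init r .refl hr⟩
    | snoc hext hdel ih =>
      obtain ⟨q₀, hrun, hinv⟩ := ih
      obtain ⟨⟨r₁', r₂', h1, h2, hdT⟩, hpd⟩ := hdel
      obtain ⟨q₁, hdq, hsq⟩ := hstep q₀ r₁' (hinv r₁' h1) _ r₂' hdT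
      exact ⟨q₁, .snoc hrun ⟨hdq, hpd⟩,
        fun r hr => hfix q₁ r₂' r hsq (hr.trans h2.symm)⟩
  rintro t ⟨z, hz⟩
  obtain ⟨q₀, hrun, -⟩ := main t z hz
  exact ⟨(q₀, z.2), hrun⟩
end
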